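/- arXiv:1805.02030 — 2 statements merged into one kernel-verified Lean document; each statement's English description precedes it below -/
import Mathlib

section
/- Let G = (Z/2)^n, and let I ⊂ Z/2[G] be the augmentation ideal (the kernel of the augmentation map Z/2[G] → Z/2 sending every group element to 1). Then the successive quotients I^p / I^{p+1} are isomorphic as Z/2-vector spaces to the p-th exterior power Λ^p((Z/2)^n); in particular dim_{Z/2}(I^p/I^{p+1}) = binom(n, p). -/
open Module

noncomputable section

/-- The augmentation map `ℤ/2[G] → ℤ/2`, sending every group element to `1`. -/
def augMap (n : ℕ) :
    MonoidAlgebra (ZMod 2) (Multiplicative (Fin n → ZMod 2)) →ₐ[ZMod 2] ZMod 2 :=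
  (MonoidAlgebra.lift (ZMod 2) (ZMod 2) (Multiplicative (Fin n → ZMod 2))) 1

/-- The augmentation ideal `I ⊆ ℤ/2[G]` for `G = (ℤ/2)ⁿ`. -/
def augIdeal (n : ℕ) :
    Ideal (MonoidAlgebra (ZMod 2) (Multiplicative (Fin n → ZMod 2))) :=
  RingHom.ker (augMap n)

/-- The `p`-th graded piece `I^p/I^{p+1}` of the augmentation filtration, as a
`ℤ/2`-vector space. -/
def augGraded (n p : ℕ) : Type :=
  ↥(Submodule.restrictScalars (ZMod 2) ((augIdeal n) ^ p)) ⧸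
    Submodule.comap (Submodule.restrictScalars (ZMod 2) ((augIdeal n) ^ p)).subtype
      (Submodule.restrictScalars (ZMod 2) ((augIdeal n) ^ (p + 1)))

instance (n p : ℕ) : AddCommGroup (augGraded n p) :=
  inferInstanceAs (AddCommGroup (_ ⧸ _))

instance (n p : ℕ) : Module (ZMod 2) (augGraded n p) :=
  inferInstanceAs (Module (ZMod 2) (_ ⧸ _))

/-! Let `g_i` be the standard generators of `G = (ℤ/2)^ι` and `e_i = g_i - 1`. Expanding
`g_S = ∏_{i ∈ S} (e_i + 1)` shows that the `2^|ι|` products `e_S = ∏_{i ∈ S} e_i` span, hence form a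
basis of `K[G]`. In characteristic 2, `e_i² = g_i² - 1 = 0`, so `e_S e_T` is `e_{S ∪ T}` or `0`, and
the spans `F_p` of the `e_S` with `|S| ≥ p` satisfy `F_p F_q ⊆ F_{p+q}`. As `ε(e_S) = 0` exactly for
`S ≠ ∅`, the augmentation ideal is `F_1`, so `I^p = F_p` and `I^p/I^{p+1}` has the basis `e_S`,
`|S| = p`: its dimension is `binom(n, p) = dim Λ^p(K^n)`. -/

open Finset

lemma Finset.card_filter_le_card_eq_choose_add {α : Type*} [Fintype α] (p : ℕ) :
    #{S : Finset α | p ≤ #S} = (Fintype.card α).choose p + #{S : Finset α | p + 1 ≤ #S} := by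
  rw [← card_filter_add_card_filter_not (fun S => #S = p), filter_filter, filter_filter,
    ← card_univ, ← card_powersetCard, powersetCard_eq_filter, powerset_univ]
  congr 2 <;> ext S <;> simp only [mem_filter, mem_univ, true_and] <;> omega

lemma Submodule.finrank_quotient_comap_subtype_add_finrank {R V : Type*} [DivisionRing R]
    [AddCommGroup V] [Module R V] [FiniteDimensional R V] {M N : Submodule R V} (h : N ≤ M) :
    finrank R (M ⧸ N.comap M.subtype) + finrank R N = finrank R M := by
  rw [← (Submodule.comapSubtypeEquivOfLe h).finrank_eq]
  exact Submodule.finrank_quotient_add_finrank _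

abbrev PiZModTwoAlgebra (K ι : Type*) [Semiring K] : Type _ :=
  MonoidAlgebra K (Multiplicative (ι → ZMod 2))

namespace PiZModTwoAlgebra

variable {K ι : Type*} [DecidableEq ι]

def gen (i : ι) : Multiplicative (ι → ZMod 2) := .ofAdd (Pi.single i 1)

lemma gen_mul_self (i : ι) : gen i * gen i = 1 := by
  rw [gen, ← ofAdd_add, ← Pi.single_add, show (1 + 1 : ZMod 2) = 0 by decide, Pi.single_zero,
    ofAdd_zero]

lemma prod_gen_filter_eq_self [Fintype ι] (g : Multiplicative (ι → ZMod 2)) :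
    ∏ i with g.toAdd i = 1, gen i = g := by
  apply Multiplicative.toAdd.injective
  rw [toAdd_prod]
  funext j
  rw [Finset.sum_apply]
  simp only [gen, toAdd_ofAdd, Pi.single_apply, sum_ite_eq, mem_filter, mem_univ, true_and]
  split_ifs with h
  · exact h.symm
  · exact ((by decide : ∀ x : ZMod 2, x ≠ 1 → x = 0) _ h).symm

section CommRing

variable [CommRing K]

def e (i : ι) : PiZModTwoAlgebra K ι := MonoidAlgebra.of K _ (gen i) - 1

def eProd (S : Finset ι) : PiZModTwoAlgebra K ι := ∏ i ∈ S, e i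

def augmentation : PiZModTwoAlgebra K ι →ₐ[K] K := MonoidAlgebra.lift K K _ 1

lemma e_mul_self [CharP K 2] (i : ι) : (e i : PiZModTwoAlgebra K ι) * e i = 0 := by
  have two_eq_zero : (2 : PiZModTwoAlgebra K ι) = 0 := by
    rw [← map_ofNat (algebraMap K _), CharTwo.two_eq_zero (R := K), map_zero]
  have of_gen_sq : MonoidAlgebra.of K _ (gen i) * MonoidAlgebra.of K _ (gen i) =
      (1 : PiZModTwoAlgebra K ι) := by
    rw [← map_mul, gen_mul_self, map_one]
  calc (e i : PiZModTwoAlgebra K ι) * e i = 2 * (1 - MonoidAlgebra.of K _ (gen i)) := by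
        rw [e]; linear_combination of_gen_sq
    _ = 0 := by rw [two_eq_zero, zero_mul]

lemma eProd_mul_eProd_of_disjoint {S T : Finset ι} (h : Disjoint S T) :
    (eProd S : PiZModTwoAlgebra K ι) * eProd T = eProd (S ∪ T) :=
  (prod_union h).symm

lemma eProd_mul_eProd_of_not_disjoint [CharP K 2] {S T : Finset ι} (h : ¬ Disjoint S T) :
    (eProd S : PiZModTwoAlgebra K ι) * eProd T = 0 := by
  obtain ⟨i, hiS, hiT⟩ := not_disjoint_iff.mp h
  rw [eProd, eProd, ← mul_prod_erase _ _ hiS, ← mul_prod_erase _ _ hiT, mul_mul_mul_comm,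
    e_mul_self, zero_mul]

lemma of_gen_eq_e_add_one (i : ι) :
    MonoidAlgebra.of K _ (gen i) = (e i : PiZModTwoAlgebra K ι) + 1 :=
  (sub_add_cancel _ _).symm

lemma of_prod_gen_eq_sum_eProd (S : Finset ι) :
    MonoidAlgebra.of K _ (∏ i ∈ S, gen i) = ∑ T ∈ S.powerset, (eProd T : PiZModTwoAlgebra K ι) := by
  simp_rw [map_prod, of_gen_eq_e_add_one, prod_add, prod_const_one, mul_one]
  rfl

lemma augmentation_e (i : ι) : augmentation (e i : PiZModTwoAlgebra K ι) = 0 := by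
  rw [e, map_sub, augmentation, MonoidAlgebra.lift_of, map_one, MonoidHom.one_apply, sub_self]

lemma eProd_mem_ker_augmentation_pow (S : Finset ι) :
    (eProd S : PiZModTwoAlgebra K ι) ∈ RingHom.ker (augmentation (K := K) (ι := ι)) ^ #S := by
  rw [← prod_const]
  exact Ideal.prod_mem_prod fun i _ => augmentation_e i

lemma augmentation_eProd (S : Finset ι) :
    augmentation (eProd S : PiZModTwoAlgebra K ι) = if S = ∅ then 1 else 0 := by
  split_ifs with h
  · rw [h, eProd, prod_empty, map_one]
  · obtain ⟨i, hi⟩ := nonempty_iff_ne_empty.mpr h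
    rw [eProd, map_prod]
    exact prod_eq_zero hi (augmentation_e i)

def eFiltration (p : ℕ) : Submodule K (PiZModTwoAlgebra K ι) :=
  Submodule.span K (eProd '' {S | p ≤ #S})

lemma eFiltration_antitone : Antitone (eFiltration : ℕ → Submodule K (PiZModTwoAlgebra K ι)) :=
  fun _ _ hpq => Submodule.span_mono (Set.image_mono fun _ hS => le_trans hpq hS)

lemma eFiltration_mul_le [CharP K 2] (p q : ℕ) :
    (eFiltration p : Submodule K (PiZModTwoAlgebra K ι)) * eFiltration q ≤ eFiltration (p + q) := by
  rw [eFiltration, eFiltration, Submodule.span_mul_span, Submodule.span_le]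
  rintro - ⟨-, ⟨S, hS, rfl⟩, -, ⟨T, hT, rfl⟩, rfl⟩
  dsimp only
  by_cases h : Disjoint S T
  · rw [eProd_mul_eProd_of_disjoint h]
    refine Submodule.subset_span ⟨S ∪ T, ?_, rfl⟩
    rw [Set.mem_ofPred_eq, card_union_of_disjoint h]
    exact add_le_add hS hT
  · rw [eProd_mul_eProd_of_not_disjoint h]
    exact zero_mem _

variable [Fintype ι]

lemma span_range_eProd :
    Submodule.span K (Set.range (eProd : Finset ι → PiZModTwoAlgebra K ι)) = ⊤ := by
  rw [eq_top_iff, ← (MonoidAlgebra.basis _ K).span_eq, Submodule.span_le]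
  rintro - ⟨g, rfl⟩
  rw [MonoidAlgebra.basis_apply, ← MonoidAlgebra.of_apply, ← prod_gen_filter_eq_self g,
    of_prod_gen_eq_sum_eProd]
  exact Submodule.sum_mem _ fun T _ => Submodule.subset_span ⟨T, rfl⟩

lemma eFiltration_zero : (eFiltration 0 : Submodule K (PiZModTwoAlgebra K ι)) = ⊤ := by
  simp [eFiltration, span_range_eProd]

variable [Nontrivial K]

lemma finrank_eq_two_pow :
    finrank K (PiZModTwoAlgebra K ι) = 2 ^ Fintype.card ι := by
  simp [finrank_eq_card_basis (MonoidAlgebra.basis _ K)]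

def eProdBasis : Basis (Finset ι) K (PiZModTwoAlgebra K ι) :=
  basisOfTopLeSpanOfCardEqFinrank eProd span_range_eProd.ge
    (by rw [Fintype.card_finset, finrank_eq_two_pow])

@[simp]
lemma coe_eProdBasis : ⇑(eProdBasis : Basis (Finset ι) K (PiZModTwoAlgebra K ι)) = eProd :=
  coe_basisOfTopLeSpanOfCardEqFinrank _ _ _

lemma augmentation_eq_coord_empty :
    (augmentation : PiZModTwoAlgebra K ι →ₐ[K] K).toLinearMap = eProdBasis.coord ∅ :=
  eProdBasis.ext fun S => by
    rw [Basis.coord_apply, Basis.repr_self, Finsupp.single_apply, AlgHom.toLinearMap_apply,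
      coe_eProdBasis, augmentation_eProd]

lemma ker_augmentation_le_eFiltration_one :
    (RingHom.ker (augmentation (K := K) (ι := ι))).restrictScalars K ≤ eFiltration 1 := by
  intro x hx
  rw [eFiltration, ← coe_eProdBasis, Basis.mem_span_image]
  intro S hS
  rw [Set.mem_ofPred_eq, Nat.one_le_iff_ne_zero, Ne, card_eq_zero]
  rintro rfl
  refine Finsupp.mem_support_iff.mp hS ?_
  rw [← Basis.coord_apply, ← augmentation_eq_coord_empty]
  exact hx

lemma restrictScalars_ker_augmentation_pow [CharP K 2] (p : ℕ) :
    (RingHom.ker (augmentation (K := K) (ι := ι)) ^ p).restrictScalars K = eFiltration p := by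
  refine le_antisymm ?_ ?_
  · induction p with
    | zero => simp [eFiltration_zero]
    | succ p ih =>
      intro x hx
      rw [Submodule.restrictScalars_mem, pow_succ] at hx
      refine Submodule.mul_induction_on hx (fun r hr s hs => ?_) (fun _ _ => add_mem)
      exact eFiltration_mul_le p 1 (Submodule.mul_mem_mul (ih hr)
        (ker_augmentation_le_eFiltration_one hs))
  · rw [eFiltration, Submodule.span_le]
    rintro - ⟨S, hS, rfl⟩
    exact Ideal.pow_le_pow_right hS (eProd_mem_ker_augmentation_pow S)

lemma finrank_eFiltration (p : ℕ) :
    finrank K (eFiltration p : Submodule K (PiZModTwoAlgebra K ι)) = #{S : Finset ι | p ≤ #S} := by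
  have := finrank_span_eq_card (R := K)
    (eProdBasis.linearIndependent.comp (Subtype.val : {S : Finset ι // p ≤ #S} → _)
      Subtype.val_injective)
  rw [coe_eProdBasis, Fintype.card_subtype] at this
  rw [← this, eFiltration, Set.image_eq_range]
  rfl

end CommRing

theorem finrank_ker_augmentation_pow_quotient_succ [Field K] [CharP K 2] [Fintype ι] (p : ℕ) :
    finrank K ((RingHom.ker (augmentation (K := K) (ι := ι)) ^ p).restrictScalars K ⧸
      Submodule.comap ((RingHom.ker (augmentation (K := K) (ι := ι)) ^ p).restrictScalars K).subtype
      ((RingHom.ker (augmentation (K := K) (ι := ι)) ^ (p + 1)).restrictScalars K)) =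
      (Fintype.card ι).choose p := by
  rw [restrictScalars_ker_augmentation_pow, restrictScalars_ker_augmentation_pow]
  have := Submodule.finrank_quotient_comap_subtype_add_finrank
    (eFiltration_antitone (K := K) (ι := ι) (Nat.le_add_right p 1))
  rw [finrank_eFiltration, finrank_eFiltration, Finset.card_filter_le_card_eq_choose_add p] at this
  omega

end PiZModTwoAlgebra

/-- For `G = (ℤ/2)ⁿ` with augmentation ideal `I ⊂ ℤ/2[G]`, the successive
quotient `I^p/I^{p+1}` is isomorphic as a `ℤ/2`-vector space to the `p`-th exterior power
`Λ^p((ℤ/2)ⁿ)`; in particular `dim_{ℤ/2}(I^p/I^{p+1}) = binom(n,p)`. -/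
theorem augGraded_iso_exteriorPower (n p : ℕ) :
    Nonempty (augGraded n p ≃ₗ[ZMod 2] ↥(⋀[ZMod 2]^p (Fin n → ZMod 2)))
    ∧ finrank (ZMod 2) (augGraded n p) = n.choose p := by
  -- `augGraded n p` unfolds to the quotient of the lemma for `K = ZMod 2`, `ι = Fin n`.
  have finrank_augGraded : finrank (ZMod 2) (augGraded n p) = n.choose p :=
    (PiZModTwoAlgebra.finrank_ker_augmentation_pow_quotient_succ p).trans
      (by rw [Fintype.card_fin])
  have : FiniteDimensional (ZMod 2) (augGraded n p) := Module.Finite.quotient (ZMod 2) _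
  refine ⟨FiniteDimensional.nonempty_linearEquiv_of_finrank_eq ?_, finrank_augGraded⟩
  rw [finrank_augGraded, exteriorPower.finrank_eq, finrank_fin_fun]

end
end

section
/- The number of connected components of the complement in R^n of an arrangement of d hyperplanes in general position equals ∑_{k=0}^{n} binom(d, k). -/
open Module Set Filter Topology

/-!
The sign vector `x ↦ (c i < f i x)ᵢ` is locally constant on the complement of the arrangement and
its fibres, the regions, are convex; so the components correspond to the sign vectors realised by
some point. These are counted by deletion–restriction: a region of the first `d` hyperplanes is
cut in two by the last one exactly when it meets it, and the regions meeting it are the regions of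
the arrangement induced on it, which is again in general position, in one dimension less. So the
number `r(d, n)` of regions satisfies `r(d + 1, n) = r(d, n) + r(d, n - 1)`, which is Pascal's
rule for `∑_{k ≤ n} C(d, k)`.
-/

theorem natCard_connectedComponents_eq_natCard_range {X Y : Type*} [TopologicalSpace X]
    [TopologicalSpace Y] [DiscreteTopology Y] {φ : X → Y} (hφ : Continuous φ)
    (hfiber : ∀ y, IsPreconnected (φ ⁻¹' {y})) :
    Nat.card (ConnectedComponents X) = Nat.card (range φ) := by
  have hψ : Continuous (rangeFactorization φ) := hφ.subtype_mk _
  refine Nat.card_congr (Equiv.ofBijective hψ.connectedComponentsLift ⟨fun a b hab => ?_, ?_⟩)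
  · obtain ⟨x, rfl⟩ := ConnectedComponents.surjective_coe a
    obtain ⟨y, rfl⟩ := ConnectedComponents.surjective_coe b
    simp only [hψ.connectedComponentsLift_apply_coe, Subtype.ext_iff,
      rangeFactorization_coe] at hab
    exact ConnectedComponents.coe_eq_coe'.2 ((hfiber (φ y)).subset_connectedComponent rfl hab)
  · exact .of_comp (hψ.connectedComponentsLift_comp_coe ▸ rangeFactorization_surjective)

lemma sum_range_choose_succ (n d : ℕ) :
    ∑ k ∈ Finset.range (n + 1), (d + 1).choose k =
      ∑ k ∈ Finset.range (n + 1), d.choose k + ∑ k ∈ Finset.range n, d.choose k := by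
  rw [Finset.sum_range_succ', Finset.sum_range_succ' (fun k => d.choose k)]
  simp only [Nat.choose_succ_succ', Finset.sum_add_distrib, Nat.choose_zero_right]
  ring

section

variable {V : Type*} [AddCommGroup V] [Module ℝ V] {K : Set V} {g : V →ₗ[ℝ] ℝ} {a : ℝ}

lemma exists_mem_lt_and_exists_mem_gt (hK : ∀ x ∈ K, ∀ v : V, ∃ ε > (0 : ℝ), x + ε • v ∈ K)
    {x v : V} (hx : x ∈ K) (hv : g v ≠ 0) : (∃ y ∈ K, g y < g x) ∧ ∃ y ∈ K, g x < g y := by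
  -- moving along `g v • v` changes `g` at the positive rate `g v * g v`
  have hpos : 0 < g v * g v := mul_self_pos.2 hv
  obtain ⟨ε, hε, hεK⟩ := hK x hx (g v • v)
  obtain ⟨δ, hδ, hδK⟩ := hK x hx (-(g v • v))
  refine ⟨⟨_, hδK, ?_⟩, ⟨_, hεK, ?_⟩⟩ <;>
    simp only [map_add, map_smul, map_neg, smul_eq_mul, smul_neg] <;>
    nlinarith [mul_pos hε hpos, mul_pos hδ hpos]

lemma nonempty_inter_gt_or_lt_iff (hK : ∀ x ∈ K, ∀ v : V, ∃ ε > (0 : ℝ), x + ε • v ∈ K)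
    (hg : ∃ y, g y ≠ a) :
    (K ∩ g ⁻¹' Ioi a).Nonempty ∨ (K ∩ g ⁻¹' Iio a).Nonempty ↔ K.Nonempty := by
  refine ⟨fun h => h.elim (·.mono inter_subset_left) (·.mono inter_subset_left),
    fun ⟨x, hx⟩ => ?_⟩
  obtain hlt | rfl | hgt := lt_trichotomy (g x) a
  · exact .inr ⟨x, hx, hlt⟩
  · obtain ⟨y, hy⟩ := hg
    obtain ⟨z, hz, hxz⟩ := (exists_mem_lt_and_exists_mem_gt hK hx (v := y - x)
      (by rwa [map_sub, sub_ne_zero])).2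
    exact .inl ⟨z, hz, hxz⟩
  · exact .inl ⟨x, hx, hgt⟩

lemma nonempty_inter_gt_and_lt_iff (hconv : Convex ℝ K)
    (hK : ∀ x ∈ K, ∀ v : V, ∃ ε > (0 : ℝ), x + ε • v ∈ K) (hg : ∃ y, g y ≠ a) :
    (K ∩ g ⁻¹' Ioi a).Nonempty ∧ (K ∩ g ⁻¹' Iio a).Nonempty ↔ (K ∩ g ⁻¹' {a}).Nonempty := by
  constructor
  · rintro ⟨⟨x, hx, hxa⟩, ⟨y, hy, hya⟩⟩
    obtain ⟨z, hz, hza⟩ := (convex_iff_ordConnected.1 (hconv.linear_image g)).out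
      ⟨y, hy, rfl⟩ ⟨x, hx, rfl⟩ ⟨le_of_lt hya, le_of_lt hxa⟩
    exact ⟨z, hz, hza⟩
  · rintro ⟨x, hx, rfl : g x = a⟩
    obtain ⟨y, hy⟩ := hg
    obtain ⟨⟨z, hz, hzx⟩, ⟨w, hw, hxw⟩⟩ := exists_mem_lt_and_exists_mem_gt hK hx (v := y - x)
      (by rwa [map_sub, sub_ne_zero])
    exact ⟨⟨w, hw, hxw⟩, ⟨z, hz, hzx⟩⟩

lemma nonempty_preimage_add_ker_iff {x₀ : V} (hx₀ : g x₀ = a) (S : Set V) :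
    ((fun w : LinearMap.ker g => x₀ + w) ⁻¹' S).Nonempty ↔ (S ∩ g ⁻¹' {a}).Nonempty := by
  constructor
  · rintro ⟨w, hw⟩
    exact ⟨_, hw, by simp [hx₀, LinearMap.mem_ker.1 w.2]⟩
  · rintro ⟨y, hy, hya⟩
    refine ⟨⟨y - x₀, ?_⟩, by simpa using hy⟩
    simp_all [LinearMap.mem_ker]

end

namespace HyperplaneArrangement

variable {ι V : Type*} [AddCommGroup V] [Module ℝ V] {d : ℕ}

def openRay (b : Bool) (a : ℝ) : Set ℝ := if b then Ioi a else Iio a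

lemma openRay_true (a : ℝ) : openRay true a = Ioi a := rfl

lemma openRay_false (a : ℝ) : openRay false a = Iio a := rfl

lemma isOpen_openRay (b : Bool) (a : ℝ) : IsOpen (openRay b a) := by
  cases b
  exacts [isOpen_Iio, isOpen_Ioi]

lemma convex_openRay (b : Bool) (a : ℝ) : Convex ℝ (openRay b a) := by
  cases b
  exacts [convex_Iio a, convex_Ioi a]

lemma mem_openRay_iff {b : Bool} {a t : ℝ} :
    t ∈ openRay b a ↔ t ≠ a ∧ decide (a < t) = b := by
  cases b <;> simp only [openRay_true, openRay_false, mem_Ioi, mem_Iio, decide_eq_true_iff,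
    decide_eq_false_iff_not, not_lt]
  exacts [⟨fun h => ⟨h.ne, h.le⟩, fun h => h.2.lt_of_ne h.1⟩, ⟨fun h => ⟨h.ne', h⟩, And.right⟩]

lemma mem_openRay_sub_iff {b : Bool} {a s t : ℝ} :
    t ∈ openRay b (a - s) ↔ s + t ∈ openRay b a := by
  cases b <;> simp [openRay, sub_lt_iff_lt_add', lt_sub_iff_add_lt']

def region (f : ι → V →ₗ[ℝ] ℝ) (c : ι → ℝ) (σ : ι → Bool) : Set V :=
  ⋂ i, f i ⁻¹' openRay (σ i) (c i)

def regions (f : ι → V →ₗ[ℝ] ℝ) (c : ι → ℝ) : Set (ι → Bool) :=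
  {σ | (region f c σ).Nonempty}

noncomputable def signVector (f : ι → V →ₗ[ℝ] ℝ) (c : ι → ℝ) (x : V) : ι → Bool :=
  fun i => decide (c i < f i x)

variable {f : ι → V →ₗ[ℝ] ℝ} {c : ι → ℝ} {σ : ι → Bool} {x : V}

lemma mem_region : x ∈ region f c σ ↔ ∀ i, f i x ∈ openRay (σ i) (c i) := mem_iInter

lemma mem_region_iff_signVector_eq :
    x ∈ region f c σ ↔ (∀ i, f i x ≠ c i) ∧ signVector f c x = σ := by
  simp only [mem_region, mem_openRay_iff, forall_and, funext_iff, signVector]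

lemma convex_region : Convex ℝ (region f c σ) :=
  convex_iInter fun i => (convex_openRay _ _).linear_preimage (f i)

lemma isOpen_region [Finite ι] [TopologicalSpace V] (hf : ∀ i, Continuous (f i)) :
    IsOpen (region f c σ) :=
  isOpen_iInter_of_finite fun i => (isOpen_openRay _ _).preimage (hf i)

lemma exists_pos_add_smul_mem_region [Finite ι] (hx : x ∈ region f c σ) (v : V) :
    ∃ ε > (0 : ℝ), x + ε • v ∈ region f c σ := by
  have hline : ∀ᶠ t in 𝓝 (0 : ℝ), x + t • v ∈ region f c σ := by
    simp only [mem_region, map_add, map_smul, smul_eq_mul]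
    refine eventually_all.2 fun i => ?_
    have : Tendsto (fun t : ℝ => f i x + t * f i v) (𝓝 0) (𝓝 (f i x)) :=
      (by fun_prop : Continuous fun t : ℝ => f i x + t * f i v).tendsto' 0 _ (by simp)
    exact this.eventually ((isOpen_openRay _ _).mem_nhds (mem_region.1 hx i))
  obtain ⟨ε, hεx, hε⟩ := ((hline.filter_mono nhdsWithin_le_nhds).and
    (self_mem_nhdsWithin : ∀ᶠ t in 𝓝[>] (0 : ℝ), t ∈ Ioi 0)).exists
  exact ⟨ε, hε, hεx⟩

theorem natCard_connectedComponents_eq_ncard_regions [Finite ι] [TopologicalSpace V]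
    [IsTopologicalAddGroup V] [ContinuousSMul ℝ V] (hf : ∀ i, Continuous (f i)) :
    Nat.card (ConnectedComponents {x : V | ∀ i, f i x ≠ c i}) = (regions f c).ncard := by
  set φ : {x : V | ∀ i, f i x ≠ c i} → (ι → Bool) := fun x => signVector f c x
  have hfiber : ∀ σ, φ ⁻¹' {σ} = Subtype.val ⁻¹' region f c σ := fun σ => by
    ext x
    change signVector f c x = σ ↔ x.1 ∈ region f c σ
    exact (mem_region_iff_signVector_eq.trans (and_iff_right x.2)).symm
  have hrange : range φ = regions f c := by
    ext σ
    simp [φ, regions, Set.Nonempty, mem_region_iff_signVector_eq, and_comm]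
  have hcont : Continuous φ := continuous_discrete_rng.2 fun σ =>
    hfiber σ ▸ (isOpen_region hf).preimage continuous_subtype_val
  rw [natCard_connectedComponents_eq_natCard_range hcont fun σ => ?_, hrange,
    Nat.card_coe_set_eq]
  have hsub : region f c σ ⊆ {x : V | ∀ i, f i x ≠ c i} := fun y hy =>
    (mem_region_iff_signVector_eq.1 hy).1
  rw [hfiber, ← Topology.IsInducing.subtypeVal.isPreconnected_image,
    Subtype.image_preimage_coe, inter_eq_right.2 hsub]
  exact convex_region.isPreconnected

lemma region_snoc (f : Fin d → V →ₗ[ℝ] ℝ) (g : V →ₗ[ℝ] ℝ) (c : Fin d → ℝ) (a : ℝ)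
    (τ : Fin d → Bool) (b : Bool) :
    region (Fin.snoc f g : Fin (d + 1) → V →ₗ[ℝ] ℝ) (Fin.snoc c a : Fin (d + 1) → ℝ)
      (Fin.snoc τ b : Fin (d + 1) → Bool) = region f c τ ∩ g ⁻¹' openRay b a := by
  ext x
  simp [mem_region, Fin.forall_fin_succ']

lemma ncard_regions_snoc (f : Fin d → V →ₗ[ℝ] ℝ) (g : V →ₗ[ℝ] ℝ) (c : Fin d → ℝ) (a : ℝ)
    (hg : ∃ y, g y ≠ a) :
    (regions (Fin.snoc f g : Fin (d + 1) → V →ₗ[ℝ] ℝ) (Fin.snoc c a : Fin (d + 1) → ℝ)).ncard =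
      (regions f c).ncard + {τ | (region f c τ ∩ g ⁻¹' {a}).Nonempty}.ncard := by
  set A : Bool → Set (Fin d → Bool) := fun b => {τ | (region f c τ ∩ g ⁻¹' openRay b a).Nonempty}
  set e : Bool → (Fin d → Bool) → Fin (d + 1) → Bool := fun b τ => Fin.snoc τ b
  have hsplit : regions (Fin.snoc f g : Fin (d + 1) → V →ₗ[ℝ] ℝ) (Fin.snoc c a : Fin (d + 1) → ℝ)
      = e true '' A true ∪ e false '' A false := by
    ext σ
    rw [← Fin.snoc_init_self σ]
    generalize Fin.init σ = τ
    cases σ (Fin.last d) <;> simp [regions, A, e, region_snoc, Fin.snoc_inj]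
  have hdisj : Disjoint (e true '' A true) (e false '' A false) :=
    disjoint_left.2 fun σ ⟨τ, _, hτ⟩ ⟨τ', _, hτ'⟩ => by
      simpa [e] using congrFun (hτ.trans hτ'.symm) (Fin.last d)
  have hK : ∀ τ, ∀ x ∈ region f c τ, ∀ v : V, ∃ ε > (0 : ℝ), x + ε • v ∈ region f c τ :=
    fun τ x hx => exists_pos_add_smul_mem_region hx
  have hunion : A true ∪ A false = regions f c :=
    ext fun τ => nonempty_inter_gt_or_lt_iff (hK τ) hg
  have hinter : A true ∩ A false = {τ | (region f c τ ∩ g ⁻¹' {a}).Nonempty} :=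
    ext fun τ => nonempty_inter_gt_and_lt_iff convex_region (hK τ) hg
  have he : ∀ b, Function.Injective (e b) := fun b τ τ' h => by
    simpa [e] using congrArg Fin.init h
  rw [hsplit, ncard_union_eq hdisj, ncard_image_of_injective _ (he true),
    ncard_image_of_injective _ (he false), ← ncard_union_add_ncard_inter,
    hunion, hinter]

lemma region_comp_subtype (f : ι → V →ₗ[ℝ] ℝ) (c : ι → ℝ) (W : Submodule ℝ V) (x₀ : V)
    (σ : ι → Bool) :
    region (fun i => (f i).comp W.subtype) (fun i => c i - f i x₀) σ
      = (fun w : W => x₀ + w) ⁻¹' region f c σ := by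
  ext w
  simp [mem_region, mem_openRay_sub_iff]

lemma setOf_nonempty_region_inter_eq_regions (f : ι → V →ₗ[ℝ] ℝ) (c : ι → ℝ)
    {g : V →ₗ[ℝ] ℝ} {a : ℝ} {x₀ : V} (hx₀ : g x₀ = a) :
    {τ | (region f c τ ∩ g ⁻¹' {a}).Nonempty}
      = regions (fun i => (f i).comp (LinearMap.ker g).subtype) (fun i => c i - f i x₀) := by
  ext τ
  change _ ↔ (region _ _ τ).Nonempty
  rw [region_comp_subtype, nonempty_preimage_add_ker_iff hx₀]
  rfl

lemma setOf_comp_subtype_eq_preimage (f : ι → V →ₗ[ℝ] ℝ) (c : ι → ℝ) (W : Submodule ℝ V)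
    (x₀ : V) (s : Finset ι) :
    {w : W | ∀ i ∈ s, (f i).comp W.subtype w = c i - f i x₀}
      = (fun w : W => x₀ + w) ⁻¹' {x | ∀ i ∈ s, f i x = c i} := by
  ext
  simp [eq_sub_iff_add_eq, add_comm]

lemma finrank_iInf_ker_comp_subtype (f : ι → V →ₗ[ℝ] ℝ) (W : Submodule ℝ V) (s : Finset ι) :
    finrank ℝ ↥(⨅ i ∈ s, LinearMap.ker ((f i).comp W.subtype))
      = finrank ℝ ↥(W ⊓ ⨅ i ∈ s, LinearMap.ker (f i)) := by
  have : ⨅ i ∈ s, LinearMap.ker ((f i).comp W.subtype)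
      = (⨅ i ∈ s, LinearMap.ker (f i)).comap W.subtype := by
    simp [LinearMap.ker_comp, Submodule.comap_iInf]
  rw [this, ← Submodule.map_comap_subtype, Submodule.finrank_map_subtype_eq]

def IsGeneralPosition (f : ι → V →ₗ[ℝ] ℝ) (c : ι → ℝ) : Prop :=
  (∀ s : Finset ι, s.card ≤ finrank ℝ V →
      {x : V | ∀ i ∈ s, f i x = c i}.Nonempty ∧
        finrank ℝ ↥(⨅ i ∈ s, LinearMap.ker (f i)) = finrank ℝ V - s.card) ∧
    ∀ s : Finset ι, s.card = finrank ℝ V + 1 → {x : V | ∀ i ∈ s, f i x = c i} = ∅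

namespace IsGeneralPosition

variable {f : ι → V →ₗ[ℝ] ℝ} {c : ι → ℝ}

lemma comp {κ : Type*} (h : IsGeneralPosition f c) {e : κ → ι} (he : Function.Injective e) :
    IsGeneralPosition (fun j => f (e j)) (fun j => c (e j)) := by
  classical
  have hflat : ∀ s : Finset κ,
      {x : V | ∀ j ∈ s, f (e j) x = c (e j)} = {x | ∀ i ∈ s.image e, f i x = c i} := by
    simp
  refine ⟨fun s hs => ?_, fun s hs => ?_⟩
  · rw [← Finset.card_image_of_injective s he] at hs ⊢
    rw [hflat, ← Finset.iInf_finset_image (f := e) (g := fun i => LinearMap.ker (f i))]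
    exact h.1 _ hs
  · rw [← Finset.card_image_of_injective s he] at hs
    rw [hflat]
    exact h.2 _ hs

lemma nonempty_hyperplane_iff (h : IsGeneralPosition f c) (i : ι) :
    (f i ⁻¹' {c i}).Nonempty ↔ 0 < finrank ℝ V := by
  classical
  have hflat : {x : V | ∀ j ∈ ({i} : Finset ι), f j x = c j} = f i ⁻¹' {c i} := by
    ext
    simp
  refine ⟨fun hne => Nat.pos_of_ne_zero fun h0 => hne.ne_empty ?_, fun hpos => ?_⟩
  · exact hflat ▸ h.2 {i} (by simp [h0])
  · exact hflat ▸ (h.1 {i} (by rwa [Finset.card_singleton])).1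

lemma finrank_ker_add_one (h : IsGeneralPosition f c) (i : ι) (hV : 0 < finrank ℝ V) :
    finrank ℝ (LinearMap.ker (f i)) + 1 = finrank ℝ V := by
  have := (h.1 {i} (by rwa [Finset.card_singleton])).2
  rw [Finset.iInf_singleton, Finset.card_singleton] at this
  omega

lemma exists_ne (h : IsGeneralPosition f c) (i : ι) : ∃ y, f i y ≠ c i := by
  by_contra! hi
  have hV := (h.nonempty_hyperplane_iff i).1 ⟨0, hi 0⟩
  have hker : LinearMap.ker (f i) = ⊤ :=
    eq_top_iff.2 fun y _ => by simp [LinearMap.mem_ker, hi y, ← hi 0]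
  have := h.finrank_ker_add_one i hV
  rw [hker, finrank_top] at this
  omega

lemma finrank_ker_add_one_of_snoc {f : Fin d → V →ₗ[ℝ] ℝ} {g : V →ₗ[ℝ] ℝ}
    {c : Fin d → ℝ} {a : ℝ}
    (h : IsGeneralPosition (Fin.snoc f g : Fin (d + 1) → V →ₗ[ℝ] ℝ)
      (Fin.snoc c a : Fin (d + 1) → ℝ))
    {x₀ : V} (hx₀ : g x₀ = a) : finrank ℝ (LinearMap.ker g) + 1 = finrank ℝ V := by
  have := h.finrank_ker_add_one (Fin.last d)
    ((h.nonempty_hyperplane_iff (Fin.last d)).1 ⟨x₀, by simpa using hx₀⟩)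
  rwa [Fin.snoc_last] at this

lemma restrict {f : Fin d → V →ₗ[ℝ] ℝ} {g : V →ₗ[ℝ] ℝ} {c : Fin d → ℝ} {a : ℝ}
    (h : IsGeneralPosition (Fin.snoc f g : Fin (d + 1) → V →ₗ[ℝ] ℝ)
      (Fin.snoc c a : Fin (d + 1) → ℝ))
    {x₀ : V} (hx₀ : g x₀ = a) :
    IsGeneralPosition (fun i => (f i).comp (LinearMap.ker g).subtype) (fun i => c i - f i x₀) := by
  classical
  have hW := h.finrank_ker_add_one_of_snoc hx₀
  let extend (s : Finset (Fin d)) : Finset (Fin (d + 1)) :=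
    insert (Fin.last d) (s.image Fin.castSucc)
  have hcard : ∀ s, (extend s).card = s.card + 1 := fun s => by
    rw [Finset.card_insert_of_notMem (by simp [Fin.castSucc_ne_last]),
      Finset.card_image_of_injective _ (Fin.castSucc_injective d)]
  have hflat : ∀ s, {x : V | ∀ i ∈ extend s, (Fin.snoc f g : Fin (d + 1) → V →ₗ[ℝ] ℝ) i x =
      (Fin.snoc c a : Fin (d + 1) → ℝ) i} = {x | ∀ i ∈ s, f i x = c i} ∩ g ⁻¹' {a} := fun s => by
    ext
    simp [extend, and_comm]
  have hker : ∀ s, ⨅ i ∈ extend s, LinearMap.ker ((Fin.snoc f g : Fin (d + 1) → V →ₗ[ℝ] ℝ) i)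
      = LinearMap.ker g ⊓ ⨅ i ∈ s, LinearMap.ker (f i) := fun s => by
    rw [Finset.iInf_insert, Finset.iInf_finset_image]
    simp
  refine ⟨fun s hs => ?_, fun s hs => ?_⟩
  all_goals have := hcard s
  · obtain ⟨hne, hrank⟩ := h.1 (extend s) (by omega)
    rw [hflat, ← nonempty_preimage_add_ker_iff hx₀, ← setOf_comp_subtype_eq_preimage] at hne
    rw [hker] at hrank
    exact ⟨hne, by rw [finrank_iInf_ker_comp_subtype, hrank]; omega⟩
  · have hempty := h.2 (extend s) (by omega)
    rw [hflat, ← not_nonempty_iff_eq_empty, ← nonempty_preimage_add_ker_iff hx₀,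
      ← setOf_comp_subtype_eq_preimage] at hempty
    exact not_nonempty_iff_eq_empty.1 hempty

end IsGeneralPosition

theorem ncard_regions_of_isGeneralPosition {f : Fin d → V →ₗ[ℝ] ℝ} {c : Fin d → ℝ}
    (h : IsGeneralPosition f c) :
    (regions f c).ncard = ∑ k ∈ Finset.range (finrank ℝ V + 1), d.choose k := by
  induction d generalizing V with
  | zero =>
    have : regions f c = univ := eq_univ_of_forall fun σ => ⟨0, mem_region.2 (·.elim0)⟩
    simp [this, Finset.sum_range_succ']
  | succ d ih =>
    obtain ⟨f, g, rfl⟩ : ∃ f' g, f = Fin.snoc f' g :=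
      ⟨Fin.init f, f (Fin.last d), (Fin.snoc_init_self f).symm⟩
    obtain ⟨c, a, rfl⟩ : ∃ c' a, c = Fin.snoc c' a :=
      ⟨Fin.init c, c (Fin.last d), (Fin.snoc_init_self c).symm⟩
    have hdel : IsGeneralPosition f c := by simpa using h.comp (Fin.castSucc_injective d)
    have hres : {τ | (region f c τ ∩ g ⁻¹' {a}).Nonempty}.ncard =
        ∑ k ∈ Finset.range (finrank ℝ V), d.choose k := by
      rcases (g ⁻¹' {a}).eq_empty_or_nonempty with hH | ⟨x₀, hx₀⟩
      · have hV : finrank ℝ V = 0 := by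
          simpa [hH] using (h.nonempty_hyperplane_iff (Fin.last d)).not
        simp [hH, hV]
      · rw [setOf_nonempty_region_inter_eq_regions f c hx₀, ih (h.restrict hx₀),
          ← h.finrank_ker_add_one_of_snoc hx₀]
    rw [ncard_regions_snoc f g c a (by simpa using h.exists_ne (Fin.last d)), ih hdel, hres,
      sum_range_choose_succ]

end HyperplaneArrangement

/-- The number of connected components of the complement in `ℝⁿ` of an
arrangement of `d` hyperplanes in general position equals `∑_{k=0}^{n} binom(d,k)`.
General position: any `k ≤ n` of the hyperplanes intersect in a (nonempty) affine subspace
of dimension `n - k`, and any `n + 1` of them have empty intersection. -/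
theorem card_components_general_position_arrangement
    (n d : ℕ) (f : Fin d → ((Fin n → ℝ) →ₗ[ℝ] ℝ)) (c : Fin d → ℝ)
    (hgen₁ : ∀ s : Finset (Fin d), s.card ≤ n →
      ({x : Fin n → ℝ | ∀ i ∈ s, f i x = c i}.Nonempty
        ∧ finrank ℝ ↥(⨅ i ∈ s, LinearMap.ker (f i)) = n - s.card))
    (hgen₂ : ∀ s : Finset (Fin d), s.card = n + 1 →
      {x : Fin n → ℝ | ∀ i ∈ s, f i x = c i} = ∅) :
    Nat.card (ConnectedComponents ↥{x : Fin n → ℝ | ∀ i, f i x ≠ c i})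
      = ∑ k ∈ Finset.range (n + 1), d.choose k := by
  have hgp : HyperplaneArrangement.IsGeneralPosition f c := by
    simpa only [HyperplaneArrangement.IsGeneralPosition, finrank_fin_fun] using
      And.intro hgen₁ hgen₂
  rw [HyperplaneArrangement.natCard_connectedComponents_eq_ncard_regions
      fun i => (f i).continuous_of_finiteDimensional,
    HyperplaneArrangement.ncard_regions_of_isGeneralPosition hgp, finrank_fin_fun]
end
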